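/- arXiv:2508.15049 — 2 statements merged into one kernel-verified Lean document; each statement's English description precedes it below -/
import Mathlib

section
/- Let q be an odd prime power with q ≡ 1 (mod 8), ω a generator of the multiplicative characters of F_q^×, g the associated Gauss sums, and q^× = q−1. Then ω(2)^{q^×/4} · g(3q^×/4)^2 · g(q^×/2) = g(3q^×/4) · g(3q^×/8) · g(7q^×/8). -/
/-!
Write `q - 1 = 8k`, `χ = ω^{3k}` (of order 8) and `ρ = ω^{4k}`, which is the quadratic character.
The Hasse–Davenport product relation for `N = 2`, `χ(4) g(χ) g(χρ) = g(χ²) g(ρ)`, reduces to the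
Jacobi sum identity `χ(4) J(χ,χ) = J(χ,ρ)`, obtained by substituting `x = (1 + t)/2` and counting
square roots. Since `χ(4) = ω(2)^{6k}` and `ω(2)^{8k} = 1`, the factor `χ(4)` is inverse to
`ω(2)^{2k}`, and the identity follows after multiplying by `g(χ²) = g(6q^×/8)`.
-/

open Finset

lemma gaussSum_eq_sum_units {R R' : Type*} [CommRing R] [Fintype R] [DecidableEq R] [CommRing R']
    (χ : MulChar R R') (ψ : AddChar R R') : gaussSum χ ψ = ∑ x : Rˣ, χ x * ψ x :=
  (Fintype.sum_of_injective Units.val Units.val_injective _ _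
    (fun x hx => by rw [χ.map_nonunit hx, zero_mul]) fun _ => rfl).symm

theorem eq_pow_of_orderOf_eq_two_mul {G : Type*} [Group G] [Finite G] [DecidableEq G]
    {ω x : G} {n : ℕ} (hω : orderOf ω = 2 * n) (hx : x ∈ Subgroup.zpowers ω) (hx2 : x ^ 2 = 1)
    (hx1 : x ≠ 1) : x = ω ^ n := by
  rw [mem_zpowers_iff_mem_range_orderOf, mem_image] at hx
  obtain ⟨m, hm, rfl⟩ := hx
  rw [mem_range, hω] at hm
  rw [← pow_mul, ← orderOf_dvd_iff_pow_eq_one, hω] at hx2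
  obtain ⟨c, hc⟩ := hx2
  obtain rfl | rfl : m = 0 ∨ m = n := by
    have : c < 2 := by nlinarith
    interval_cases c <;> omega
  · exact absurd (pow_zero ω) hx1
  · rfl

section FiniteField

variable {F R : Type*} [Field F] [Fintype F] [CommRing R]

theorem MulChar.apply_pow_card_sub_one (χ : MulChar F R) {a : F} (ha : a ≠ 0) :
    χ a ^ (Fintype.card F - 1) = 1 := by
  rw [← map_pow, FiniteField.pow_card_sub_one_eq_one a ha, map_one]

theorem MulChar.orderOf_eq_card_sub_one_of_forall_mem_zpowers [IsDomain R]
    [HasEnoughRootsOfUnity R (Monoid.exponent Fˣ)] {ω : MulChar F R}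
    (hω : ∀ χ, χ ∈ Subgroup.zpowers ω) : orderOf ω = Fintype.card F - 1 := by
  classical
  rw [orderOf_eq_card_of_forall_mem_zpowers hω, card_eq_card_units_of_hasEnoughRootsOfUnity,
    Nat.card_eq_fintype_card, Fintype.card_units]

theorem MulChar.apply_four_mul_jacobiSum_self_eq_sum_one_sub_sq (hF : ringChar F ≠ 2)
    (χ : MulChar F R) : χ 4 * jacobiSum χ χ = ∑ t : F, χ (1 - t ^ 2) := by
  have h2 : (2 : F) ≠ 0 := Ring.two_ne_zero hF
  let e : F ≃ F :=
    { toFun := fun t => (t + 1) / 2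
      invFun := fun s => 2 * s - 1
      left_inv := fun t => by field_simp; ring
      right_inv := fun s => by field_simp; ring }
  rw [jacobiSum, mul_sum, ← e.sum_comp]
  refine sum_congr rfl fun t _ => ?_
  rw [← map_mul, ← map_mul]
  congr 1
  change 4 * ((t + 1) / 2 * (1 - (t + 1) / 2)) = 1 - t ^ 2
  field_simp
  ring

variable [DecidableEq F]

theorem sum_comp_sq_eq_sum_quadraticChar_add_one_mul (hF : ringChar F ≠ 2) (f : F → R) :
    ∑ t : F, f (t ^ 2) = ∑ u : F, ((quadraticChar F u : R) + 1) * f u := by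
  rw [← sum_fiberwise_of_maps_to' (g := fun t : F => t ^ 2) (fun _ _ => mem_univ _)]
  refine sum_congr rfl fun u _ => ?_
  rw [sum_const, nsmul_eq_mul]
  have h := quadraticChar_card_sqrts hF u
  rw [Set.toFinset_ofPred] at h
  rw [← Int.cast_one, ← Int.cast_add, ← h, Int.cast_natCast]

variable [IsDomain R]

theorem MulChar.apply_four_mul_jacobiSum_self_eq_jacobiSum_quadraticChar (hF : ringChar F ≠ 2)
    {χ : MulChar F R} (hχ : χ ≠ 1) :
    χ 4 * jacobiSum χ χ = jacobiSum χ ((quadraticChar F).ringHomComp (Int.castRingHom R)) := by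
  have hsum : ∑ u : F, χ (1 - u) = 0 :=
    ((Equiv.subLeft (1 : F)).sum_comp χ).trans (MulChar.sum_eq_zero_of_ne_one hχ)
  rw [χ.apply_four_mul_jacobiSum_self_eq_sum_one_sub_sq hF,
    sum_comp_sq_eq_sum_quadraticChar_add_one_mul hF (fun u => χ (1 - u)), jacobiSum_comm]
  simp only [add_mul, one_mul, sum_add_distrib, hsum, add_zero, jacobiSum]
  rfl

/-- The Hasse–Davenport product relation for `N = 2`. -/
theorem MulChar.apply_four_mul_gaussSum_mul_gaussSum_mul_quadraticChar (hF : ringChar F ≠ 2)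
    (hR : (Fintype.card F : R) ≠ 0) {χ : MulChar F R} (hχ : χ ^ 2 ≠ 1) {ψ : AddChar F R}
    (hψ : ψ.IsPrimitive) :
    χ 4 * gaussSum χ ψ * gaussSum (χ * (quadraticChar F).ringHomComp (Int.castRingHom R)) ψ =
      gaussSum (χ ^ 2) ψ * gaussSum ((quadraticChar F).ringHomComp (Int.castRingHom R)) ψ := by
  have hχ1 : χ ≠ 1 := by rintro rfl; exact hχ (one_pow 2)
  have hjac := χ.apply_four_mul_jacobiSum_self_eq_jacobiSum_quadraticChar hF hχ1
  set ρ := (quadraticChar F).ringHomComp (Int.castRingHom R)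
  have hχρ : χ * ρ ≠ 1 := by
    intro h
    have hρ : ρ ^ 2 = 1 := ((quadraticChar_isQuadratic F).comp _).sq_eq_one
    rw [eq_inv_of_mul_eq_one_left h, inv_pow, hρ, inv_one] at hχ
    exact hχ rfl
  have hsq := jacobiSum_mul_nontrivial (φ := χ) (by rwa [← sq]) ψ
  have hmix := jacobiSum_mul_nontrivial hχρ ψ
  rw [← sq] at hsq
  refine mul_left_cancel₀ (gaussSum_ne_zero_of_nontrivial hR hχ1 hψ) ?_
  linear_combination -(χ 4 * gaussSum (χ * ρ) ψ) * hsq +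
    gaussSum (χ ^ 2) ψ * gaussSum (χ * ρ) ψ * hjac + gaussSum (χ ^ 2) ψ * hmix

end FiniteField

theorem gauss_sum_octic_identity_general
    (F : Type) [Field F] [Fintype F] [DecidableEq F]
    (h8 : Fintype.card F % 8 = 1)
    (ω : MulChar F ℂ) (hω : ∀ χ : MulChar F ℂ, ∃ m : ℤ, χ = ω ^ m)
    (Θ : AddChar F ℂ) (hΘ : Θ ≠ 1)
    (g : ℤ → ℂ) (hg : ∀ m : ℤ, g m = ∑ x : Fˣ, (ω ^ m) (x : F) * Θ (x : F)) :
    (ω 2) ^ ((Fintype.card F - 1) / 4) *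
        g ((3 * (Fintype.card F - 1) / 4 : ℕ)) ^ 2 * g (((Fintype.card F - 1) / 2 : ℕ)) =
      g ((3 * (Fintype.card F - 1) / 4 : ℕ)) * g ((3 * (Fintype.card F - 1) / 8 : ℕ)) *
        g ((7 * (Fintype.card F - 1) / 8 : ℕ)) := by
  obtain ⟨k, hk⟩ : ∃ k, Fintype.card F - 1 = 8 * k := ⟨(Fintype.card F - 1) / 8, by omega⟩
  have hk0 : 0 < k := by have := Fintype.one_lt_card (α := F); omega
  have hF : ringChar F ≠ 2 := by rw [Ne, FiniteField.even_card_iff_char_two]; omega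
  have hzpowers : ∀ χ, χ ∈ Subgroup.zpowers ω := fun χ =>
    Subgroup.mem_zpowers_iff.mpr ((hω χ).imp fun _ => Eq.symm)
  have hord : orderOf ω = 8 * k :=
    hk ▸ MulChar.orderOf_eq_card_sub_one_of_forall_mem_zpowers hzpowers
  have hρ : (quadraticChar F).ringHomComp (Int.castRingHom ℂ) = ω ^ (4 * k) :=
    eq_pow_of_orderOf_eq_two_mul (by rw [hord]; ring) (hzpowers _)
      ((quadraticChar_isQuadratic F).comp _).sq_eq_one
      ((MulChar.ringHomComp_ne_one_iff Int.cast_injective).mpr (quadraticChar_ne_one hF))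
  have hHD := MulChar.apply_four_mul_gaussSum_mul_gaussSum_mul_quadraticChar hF
    (Nat.cast_ne_zero.mpr Fintype.card_ne_zero) (χ := ω ^ (3 * k))
    (by rw [← pow_mul]; exact pow_ne_one_of_lt_orderOf (by omega) (by omega))
    (AddChar.IsPrimitive.of_ne_one hΘ)
  rw [hρ, ← pow_mul, ← pow_add, show 3 * k * 2 = 6 * k by ring, show 3 * k + 4 * k = 7 * k by ring]
    at hHD
  have hunit : ω 2 ^ (2 * k) * (ω ^ (3 * k)) 4 = 1 := by
    rw [MulChar.pow_apply' ω (by omega), show (4 : F) = 2 ^ 2 by norm_num, map_pow, ← pow_mul,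
      ← pow_add, show 2 * k + 2 * (3 * k) = Fintype.card F - 1 by omega,
      MulChar.apply_pow_card_sub_one ω (Ring.two_ne_zero hF)]
  have hgauss : ∀ n : ℕ, g n = gaussSum (ω ^ n) Θ := fun n => by
    rw [hg, zpow_natCast, gaussSum_eq_sum_units]
  rw [show (Fintype.card F - 1) / 4 = 2 * k by omega,
    show 3 * (Fintype.card F - 1) / 4 = 6 * k by omega,
    show (Fintype.card F - 1) / 2 = 4 * k by omega,
    show 3 * (Fintype.card F - 1) / 8 = 3 * k by omega,
    show 7 * (Fintype.card F - 1) / 8 = 7 * k by omega, hgauss, hgauss, hgauss, hgauss]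
  linear_combination -(ω 2 ^ (2 * k) * gaussSum (ω ^ (6 * k)) Θ) * hHD +
    gaussSum (ω ^ (6 * k)) Θ * gaussSum (ω ^ (3 * k)) Θ * gaussSum (ω ^ (7 * k)) Θ * hunit

/-- For `q ≡ 1 (mod 8)`, with `q^× = q-1`:
`ω(2)^{q^×/4} g(3q^×/4)^2 g(q^×/2) = g(3q^×/4) g(3q^×/8) g(7q^×/8)`. -/
theorem gauss_sum_octic_identity
    (F : Type) [Field F] [Fintype F] [DecidableEq F] (hodd : Odd (Fintype.card F))
    (h8 : Fintype.card F % 8 = 1)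
    (ω : MulChar F ℂ) (hω : ∀ χ : MulChar F ℂ, ∃ m : ℤ, χ = ω ^ m)
    (Θ : AddChar F ℂ) (hΘ : Θ ≠ 1)
    (g : ℤ → ℂ) (hg : ∀ m : ℤ, g m = ∑ x : Fˣ, (ω ^ m) (x : F) * Θ (x : F)) :
    (ω 2) ^ ((Fintype.card F - 1) / 4) *
        g ((3 * (Fintype.card F - 1) / 4 : ℕ)) ^ 2 * g (((Fintype.card F - 1) / 2 : ℕ)) =
      g ((3 * (Fintype.card F - 1) / 4 : ℕ)) * g ((3 * (Fintype.card F - 1) / 8 : ℕ)) *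
        g ((7 * (Fintype.card F - 1) / 8 : ℕ)) :=
  gauss_sum_octic_identity_general F h8 ω hω Θ hΘ g hg
end

section
/- Let q be an odd prime power of characteristic p, (γ, δ, N) a gamma triple with N | q−1, and t ∈ F_q^×. Then F_q(γ, pδ, N | t) = F_q(γ, δ, N | t^p). -/
open Polynomial

/-- `ζ_N = e^{2πi/N}`. -/
noncomputable def zetaN (N : ℕ) : ℂ := Complex.exp (2 * Real.pi * Complex.I / N)

/-- The gcd polynomial `D_δ(T)`. -/
noncomputable def Dpoly (d : ℕ) (γ δ : Fin (d + 2) → ℤ) (N : ℕ) : Polynomial ℂ :=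
  EuclideanDomain.gcd
    (∏ i ∈ Finset.univ.filter (fun i => γ i < 0),
      (X ^ (-(γ i)).toNat - C (zetaN N ^ (δ i))))
    (∏ i ∈ Finset.univ.filter (fun i => 0 < γ i),
      (X ^ (γ i).toNat - C (zetaN N ^ (-(δ i)))))

/-- `s_δ(m)`: the multiplicity of `e^{2πim/(q-1)}` as a root of `D_δ(T)`. -/
noncomputable def sMult (q d : ℕ) (γ δ : Fin (d + 2) → ℤ) (N : ℕ) (m : ℤ) : ℕ :=
  (Dpoly d γ δ N).rootMultiplicity
    (Complex.exp (2 * Real.pi * Complex.I * m / ((q : ℂ) - 1)))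

/-- The Gauss sum `g(m) = Σ_{x∈F^×} ω^m(x) Θ(x)`. -/
noncomputable def gSum (F : Type) [Field F] [Fintype F] [DecidableEq F]
    (ω : MulChar F ℂ) (Θ : AddChar F ℂ) (m : ℤ) : ℂ :=
  ∑ x : Fˣ, (ω ^ m) (x : F) * Θ (x : F)

/-- The finite hypergeometric sum `F_q(γ, δ, N | t)` of a gamma triple. -/
noncomputable def Fhyp (F : Type) [Field F] [Fintype F] [DecidableEq F]
    (ω : MulChar F ℂ) (Θ : AddChar F ℂ)
    (d : ℕ) (γ δ : Fin (d + 2) → ℤ) (N : ℕ) (t : F) : ℂ :=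
  (1 / (1 - (Fintype.card F : ℂ))) *
    ∑ m ∈ Finset.range (Fintype.card F - 1),
      (∏ i, gSum F ω Θ (-(γ i) * (m : ℤ) + δ i * (((Fintype.card F - 1) / N : ℕ) : ℤ)) /
            gSum F ω Θ (δ i * (((Fintype.card F - 1) / N : ℕ) : ℤ))) *
      (Fintype.card F : ℂ) ^
        ((sMult (Fintype.card F) d γ δ N (-(m : ℤ)) : ℤ) -
         (sMult (Fintype.card F) d γ δ N 0 : ℤ)) *
      (ω ((∏ i, (γ i : F) ^ (γ i)) * t)) ^ m



/-!
Substituting `m ↦ p m mod (q - 1)`, a permutation of the summation range because `p ∤ q - 1`,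
identifies the two sums term by term.
* Gauss sums: every additive character is a multiplicative shift of `Θ`, so `Θ (x ^ p) = Θ (c x)`
  for some `c ≠ 0`, whence `g(p n) = ω(c)^{p n} g(n)`. In the product of ratios the factors
  `ω(c)^{…}` combine to `ω(c)^{-p m Σ γᵢ} = 1`.
* Weights: `x ↦ x ^ p` is injective on the `(q - 1)`-th roots of unity, so `ξ ^ p` is a root of
  `X ^ a - ζ ^ (p b)` exactly when `ξ` is a root of `X ^ a - ζ ^ b`; hence `s_{pδ}(p m) = s_δ(m)`.
* The constant `∏ γᵢ ^ γᵢ` lies in the prime field, so it is fixed by Frobenius.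
-/

lemma MulChar.zpow_apply_of_ne_zero {F R : Type*} [Field F] [Field R] (χ : MulChar F R) (n : ℤ)
    {x : F} (hx : x ≠ 0) : (χ ^ n) x = χ x ^ n := by
  have := χ.zpow_apply_coe n (Units.mk0 x hx)
  simp only [Units.val_mk0, Units.val_zpow_eq_zpow_val] at this
  exact this.trans (map_zpow₀ χ.toMonoidWithZeroHom x n)

section Characters

variable {F : Type*} [Field F] [Fintype F]

lemma AddChar.exists_mulShift_eq {ψ : AddChar F ℂ} (hψ : ψ ≠ 1) (φ : AddChar F ℂ) :
    ∃ a : F, ψ.mulShift a = φ :=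
  ((Fintype.bijective_iff_injective_and_card _).mpr
    ⟨AddChar.to_mulShift_inj_of_isPrimitive (.of_ne_one hψ), AddChar.card_eq.symm⟩).2 φ

variable (p : ℕ) [Fact p.Prime] [CharP F p]

lemma gaussSum_pow_comp_frobenius {R : Type*} [CommRing R] (χ : MulChar F R)
    (ψ : AddChar F R) :
    gaussSum (χ ^ p) (ψ.compAddMonoidHom (frobenius F p).toAddMonoidHom) = gaussSum χ ψ := by
  refine Fintype.sum_bijective _ (frobeniusEquiv F p).bijective _ _ fun x => ?_
  simp [MulChar.pow_apply' χ (Fact.out : p.Prime).ne_zero, frobenius_def]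

lemma exists_gaussSum_pow_eq {ψ : AddChar F ℂ} (hψ : ψ ≠ 1) :
    ∃ c : Fˣ, ∀ χ : MulChar F ℂ, gaussSum (χ ^ p) ψ = (χ ^ p) c * gaussSum χ ψ := by
  obtain ⟨a, ha⟩ := AddChar.exists_mulShift_eq hψ
    (ψ.compAddMonoidHom (frobenius F p).toAddMonoidHom)
  have ha0 : a ≠ 0 := by
    rintro rfl
    refine hψ (DFunLike.ext _ _ fun x => ?_)
    obtain ⟨y, rfl⟩ := (frobeniusEquiv F p).surjective x
    simpa using (DFunLike.congr_fun ha y).symm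
  refine ⟨Units.mk0 a ha0, fun χ => ?_⟩
  rw [← gaussSum_pow_comp_frobenius p χ ψ, ← ha]
  exact (gaussSum_mulShift _ ψ _).symm

end Characters

lemma Finset.prod_div_apply_mul_eq {ι K : Type*} [Field K] (s : Finset ι) {g : ℤ → K} {u : K}
    (hu : u ≠ 0) {k : ℤ} (hg : ∀ n, g (k * n) = u ^ (k * n) * g n) (a b : ι → ℤ) :
    ∏ i ∈ s, g (k * a i) / g (k * b i) =
      u ^ (k * ∑ i ∈ s, (a i - b i)) * ∏ i ∈ s, g (a i) / g (b i) := by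
  induction s using Finset.cons_induction with
  | empty => simp
  | cons j s hj ih =>
    rw [prod_cons, prod_cons, sum_cons, ih, hg, hg, mul_add, zpow_add₀ hu, mul_sub,
      zpow_sub₀ hu]
    ring

section GaussSums

variable {F : Type} [Field F] [Fintype F] [DecidableEq F] (ω : MulChar F ℂ) (Θ : AddChar F ℂ)

lemma gSum_eq_gaussSum (m : ℤ) : gSum F ω Θ m = gaussSum (ω ^ m) Θ :=
  Fintype.sum_of_injective _ Units.val_injective _ _
    (fun _ hx => by rw [MulChar.map_nonunit _ fun hu => hx ⟨hu.unit, rfl⟩, zero_mul])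
    fun _ => rfl

lemma gSum_eq_of_modEq {a b : ℤ} (h : a ≡ b [ZMOD (Fintype.card F - 1 : ℕ)]) :
    gSum F ω Θ a = gSum F ω Θ b := by
  rw [gSum_eq_gaussSum, gSum_eq_gaussSum, zpow_eq_zpow_iff_modEq.mpr
    (h.of_dvd (Int.natCast_dvd_natCast.mpr ω.orderOf_dvd_card_sub_one))]

variable {Θ} (p : ℕ) [Fact p.Prime] [CharP F p]

lemma exists_gSum_mul_eq (hΘ : Θ ≠ 1) :
    ∃ u : ℂ, u ≠ 0 ∧ ∀ n : ℤ, gSum F ω Θ (p * n) = u ^ ((p : ℤ) * n) * gSum F ω Θ n := by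
  obtain ⟨c, hc⟩ := exists_gaussSum_pow_eq p hΘ
  refine ⟨ω c, (c.isUnit.map ω).ne_zero, fun n => ?_⟩
  rw [gSum_eq_gaussSum, gSum_eq_gaussSum, mul_comm, zpow_mul, zpow_natCast, hc,
    ← zpow_natCast, ← zpow_mul, MulChar.zpow_apply_of_ne_zero _ _ c.ne_zero, mul_comm n]

lemma prod_gSum_div_mul_of_modEq (hΘ : Θ ≠ 1) {ι : Type*} [Fintype ι]
    {γ δ : ι → ℤ} (hγ : ∑ i, γ i = 0) (K : ℤ) {a m : ℤ}
    (h : a ≡ p * m [ZMOD (Fintype.card F - 1 : ℕ)]) :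
    ∏ i, gSum F ω Θ (-(γ i) * a + p * δ i * K) / gSum F ω Θ (p * δ i * K) =
      ∏ i, gSum F ω Θ (-(γ i) * m + δ i * K) / gSum F ω Θ (δ i * K) := by
  obtain ⟨u, hu, hg⟩ := exists_gSum_mul_eq ω p hΘ
  have hshift : ∀ i, gSum F ω Θ (-(γ i) * a + p * δ i * K) =
      gSum F ω Θ (p * (-(γ i) * m + δ i * K)) :=
    fun i => gSum_eq_of_modEq ω Θ <| by
      have := (h.mul_left (-(γ i))).add_right (p * δ i * K)
      rwa [show -(γ i) * (p * m) + p * δ i * K = p * (-(γ i) * m + δ i * K) by ring] at this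
  have hexp : ∑ i, ((-(γ i) * m + δ i * K) - δ i * K) = 0 := by
    simp [← Finset.sum_mul, hγ]
  rw [Finset.prod_congr rfl fun i _ => by rw [hshift, mul_assoc],
    Finset.prod_div_apply_mul_eq _ hu hg, hexp, mul_zero, zpow_zero, one_mul]

end GaussSums

namespace Polynomial

lemma rootMultiplicity_X_pow_sub_C {a : ℕ} (ha : a ≠ 0) {c : ℂ} (hc : c ≠ 0) (x : ℂ) :
    rootMultiplicity x (X ^ a - C c) = if x ^ a = c then 1 else 0 := by
  classical
  rw [← count_roots, ← nthRoots,
    Multiset.count_eq_of_nodup ((Complex.isPrimitiveRoot_exp a ha).nthRoots_nodup hc)]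
  simp only [mem_nthRoots (Nat.pos_of_ne_zero ha)]

lemma rootMultiplicity_prod {R ι : Type*} [CommRing R] [IsDomain R] {s : Finset ι}
    {f : ι → R[X]} (hf : ∀ i ∈ s, f i ≠ 0) (x : R) :
    rootMultiplicity x (∏ i ∈ s, f i) = ∑ i ∈ s, rootMultiplicity x (f i) := by
  classical
  rw [← count_roots, roots_prod _ _ (Finset.prod_ne_zero_iff.mpr hf), Multiset.count_bind]
  simp only [count_roots]
  rfl

lemma rootMultiplicity_gcd {K : Type*} [Field K] [DecidableEq K] {P Q : K[X]} (hP : P ≠ 0)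
    (hQ : Q ≠ 0) (x : K) :
    rootMultiplicity x (EuclideanDomain.gcd P Q) =
      min (rootMultiplicity x P) (rootMultiplicity x Q) := by
  have hg : EuclideanDomain.gcd P Q ≠ 0 := by
    rw [Ne, EuclideanDomain.gcd_eq_zero_iff]
    exact fun h => hP h.1
  refine le_antisymm (le_min ?_ ?_) ((le_rootMultiplicity_iff hg).mpr ?_)
  · exact (le_rootMultiplicity_iff hP).mpr
      ((pow_rootMultiplicity_dvd _ _).trans (EuclideanDomain.gcd_dvd_left P Q))
  · exact (le_rootMultiplicity_iff hQ).mpr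
      ((pow_rootMultiplicity_dvd _ _).trans (EuclideanDomain.gcd_dvd_right P Q))
  · exact EuclideanDomain.dvd_gcd
      ((pow_dvd_pow _ (min_le_left _ _)).trans (pow_rootMultiplicity_dvd _ _))
      ((pow_dvd_pow _ (min_le_right _ _)).trans (pow_rootMultiplicity_dvd _ _))

end Polynomial

lemma rootMultiplicity_Dpoly (d : ℕ) (γ δ : Fin (d + 2) → ℤ) (N : ℕ) (y : ℂ) :
    (Dpoly d γ δ N).rootMultiplicity y =
      min (∑ i ∈ Finset.univ.filter (fun i => γ i < 0),
            if y ^ (-(γ i)).toNat = zetaN N ^ δ i then 1 else 0)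
        (∑ i ∈ Finset.univ.filter (fun i => 0 < γ i),
            if y ^ (γ i).toNat = zetaN N ^ (-(δ i)) then 1 else 0) := by
  have hζ : zetaN N ≠ 0 := Complex.exp_ne_zero _
  have hneg : ∀ i ∈ Finset.univ.filter (fun i => γ i < 0), (-(γ i)).toNat ≠ 0 := by
    intro i hi; have := (Finset.mem_filter.mp hi).2; omega
  have hpos : ∀ i ∈ Finset.univ.filter (fun i => 0 < γ i), (γ i).toNat ≠ 0 := by
    intro i hi; have := (Finset.mem_filter.mp hi).2; omega
  have hne : ∀ {a : ℕ} (c : ℂ), a ≠ 0 → (X ^ a - C c : ℂ[X]) ≠ 0 :=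
    fun c ha => X_pow_sub_C_ne_zero (Nat.pos_of_ne_zero ha) c
  rw [Dpoly, rootMultiplicity_gcd (Finset.prod_ne_zero_iff.mpr fun i hi => hne _ (hneg i hi))
      (Finset.prod_ne_zero_iff.mpr fun i hi => hne _ (hpos i hi)),
    rootMultiplicity_prod fun i hi => hne _ (hneg i hi),
    rootMultiplicity_prod fun i hi => hne _ (hpos i hi)]
  congr 1 <;> refine Finset.sum_congr rfl fun i hi => ?_
  · exact rootMultiplicity_X_pow_sub_C (hneg i hi) (zpow_ne_zero _ hζ) y
  · exact rootMultiplicity_X_pow_sub_C (hpos i hi) (zpow_ne_zero _ hζ) y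

lemma eq_of_pow_eq_pow_of_coprime {G : Type*} [CommGroupWithZero G] {p Q : ℕ} (hQ : Q ≠ 0)
    (hp : p.Coprime Q) {y z : G} (hy : y ^ Q = 1) (hz : z ^ Q = 1) (h : y ^ p = z ^ p) :
    y = z := by
  have hz0 : z ≠ 0 := by rintro rfl; simp [hQ] at hz
  have : (y / z) ^ p.gcd Q = 1 := pow_gcd_eq_one.mpr
    ⟨by rw [div_pow, h, div_self (pow_ne_zero _ hz0)], by rw [div_pow, hy, hz, div_one]⟩
  rwa [hp, pow_one, div_eq_one_iff_eq hz0] at this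

lemma rootMultiplicity_Dpoly_pow (d : ℕ) (γ δ : Fin (d + 2) → ℤ) {N Q p : ℕ} (hQ : Q ≠ 0)
    (hN : N ∣ Q) (hp : p.Coprime Q) {y : ℂ} (hy : y ^ Q = 1) :
    (Dpoly d γ (fun i => p * δ i) N).rootMultiplicity (y ^ p) =
      (Dpoly d γ δ N).rootMultiplicity y := by
  have hζ : zetaN N ^ Q = 1 :=
    ((Complex.isPrimitiveRoot_exp N (by rintro rfl; simp_all)).pow_eq_one_iff_dvd Q).mpr hN
  have key : ∀ (a : ℕ) (b : ℤ), (y ^ p) ^ a = zetaN N ^ ((p : ℤ) * b) ↔ y ^ a = zetaN N ^ b := by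
    intro a b
    rw [← pow_mul, mul_comm p, pow_mul, mul_comm, zpow_mul, zpow_natCast]
    refine ⟨eq_of_pow_eq_pow_of_coprime hQ hp ?_ ?_, fun h => by rw [h]⟩
    · rw [← pow_mul, mul_comm, pow_mul, hy, one_pow]
    · rw [← zpow_natCast, ← zpow_mul, mul_comm, zpow_mul, zpow_natCast, hζ, one_zpow]
  simp only [rootMultiplicity_Dpoly, ← mul_neg, key]

lemma sMult_mul_of_modEq {q : ℕ} (hq : 1 < q) (d : ℕ) (γ δ : Fin (d + 2) → ℤ) {N p : ℕ}
    (hN : N ∣ q - 1) (hp : p.Coprime (q - 1)) {m m' : ℤ} (h : m' ≡ p * m [ZMOD (q - 1 : ℕ)]) :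
    sMult q d γ (fun i => p * δ i) N m' = sMult q d γ δ N m := by
  have hQ : q - 1 ≠ 0 := by omega
  set ξ := Complex.exp (2 * Real.pi * Complex.I / (q - 1 : ℕ))
  have hξ : IsPrimitiveRoot ξ (q - 1) := Complex.isPrimitiveRoot_exp _ hQ
  have hexp (k : ℤ) : Complex.exp (2 * Real.pi * Complex.I * k / ((q : ℂ) - 1)) = ξ ^ k := by
    rw [← Complex.exp_int_mul, Nat.cast_sub hq.le, Nat.cast_one]
    ring_nf
  have hpow : ξ ^ m' = (ξ ^ m) ^ p := by
    obtain ⟨k, hk⟩ := h.symm.dvd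
    rw [show m' = m * p + (q - 1 : ℕ) * k by linarith, zpow_add₀ (hξ.ne_zero hQ), zpow_mul ξ _ k,
      zpow_natCast ξ, hξ.pow_eq_one, one_zpow, mul_one, zpow_mul, zpow_natCast]
  have hroot : (ξ ^ m) ^ (q - 1) = 1 := by
    rw [← zpow_natCast, ← zpow_mul, mul_comm, zpow_mul, zpow_natCast, hξ.pow_eq_one, one_zpow]
  rw [sMult, sMult, hexp, hexp, hpow, rootMultiplicity_Dpoly_pow d γ δ hQ hN hp hroot]

lemma Nat.eq_of_mul_mod_eq {n p a b : ℕ} (hp : p.Coprime n) (ha : a < n) (hb : b < n)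
    (h : p * a % n = p * b % n) : a = b := by
  have := Nat.ModEq.cancel_left_of_coprime hp.symm h
  rwa [Nat.ModEq, Nat.mod_eq_of_lt ha, Nat.mod_eq_of_lt hb] at this

lemma Finset.sum_range_mul_mod {M : Type*} [AddCommMonoid M] {n p : ℕ} (hp : p.Coprime n)
    (f : ℕ → M) : ∑ m ∈ range n, f (p * m % n) = ∑ m ∈ range n, f m := by
  have hmaps : Set.MapsTo (fun m => p * m % n) (range n) (range n) := fun m hm =>
    mem_range.mpr (Nat.mod_lt _ (by simp at hm; omega))
  have hinj : Set.InjOn (fun m => p * m % n) (range n) := fun a ha b hb =>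
    Nat.eq_of_mul_mod_eq hp (mem_range.mp ha) (mem_range.mp hb)
  exact sum_nbij _ hmaps hinj (surjOn_of_injOn_of_card_le _ hmaps hinj le_rfl) fun _ _ => rfl

lemma MulChar.pow_mul_mod_eq {F : Type*} [Field F] [Fintype F] (ω : MulChar F ℂ) {p : ℕ}
    (hp : p.Coprime (Fintype.card F - 1)) (x : F) {m : ℕ} (hm : m < Fintype.card F - 1) :
    ω x ^ (p * m % (Fintype.card F - 1)) = ω (x ^ p) ^ m := by
  rcases eq_or_ne x 0 with rfl | hx
  · rcases eq_or_ne m 0 with rfl | hm0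
    · simp
    have hmod : p * m % (Fintype.card F - 1) ≠ 0 := fun h0 =>
      hm0 (Nat.eq_of_mul_mod_eq hp hm (by omega) (by simpa using h0))
    have hp0 : p ≠ 0 := by rintro rfl; simp at hmod
    simp [hmod, hm0, hp0]
  · have hω : ω x ^ (Fintype.card F - 1) = 1 := by
      rw [← map_pow, FiniteField.pow_card_sub_one_eq_one x hx, map_one]
    rw [← pow_eq_pow_mod _ hω, pow_mul, map_pow]

lemma FiniteField.coprime_ringChar_card_sub_one (F : Type*) [Field F] [Fintype F] :
    (ringChar F).Coprime (Fintype.card F - 1) :=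
  (((Nat.coprime_self_sub_left Fintype.card_pos).mpr (Nat.coprime_one_left _)).coprime_dvd_right
    (ringChar.dvd (FiniteField.cast_card_eq_zero F))).symm

theorem Fhyp_frobenius_general (F : Type) [Field F] [Fintype F] [DecidableEq F]
    (ω : MulChar F ℂ)
    (Θ : AddChar F ℂ) (hΘ : Θ ≠ 1)
    (d : ℕ) (γ δ : Fin (d + 2) → ℤ)
    (hsum : ∑ i, γ i = 0)
    (N : ℕ) (hNdvd : N ∣ Fintype.card F - 1)
    (t : F) :
    Fhyp F ω Θ d γ (fun i => (ringChar F : ℤ) * δ i) N t =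
      Fhyp F ω Θ d γ δ N (t ^ ringChar F) := by
  have : Fact (ringChar F).Prime := ⟨CharP.char_is_prime F _⟩
  have hq : 1 < Fintype.card F := Fintype.one_lt_card
  have hp := FiniteField.coprime_ringChar_card_sub_one F
  have hA : (∏ i, (γ i : F) ^ γ i) ^ ringChar F = ∏ i, (γ i : F) ^ γ i := by
    simp [← frobenius_def, map_prod, map_zpow₀]
  rw [Fhyp, Fhyp]
  refine congrArg ((1 / (1 - (Fintype.card F : ℂ))) * ·) ?_
  rw [← Finset.sum_range_mul_mod hp]
  refine Finset.sum_congr rfl fun m hm => ?_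
  have hmod : ((ringChar F * m % (Fintype.card F - 1) : ℕ) : ℤ) ≡ ringChar F * m
      [ZMOD (Fintype.card F - 1 : ℕ)] :=
    mod_cast Nat.mod_modEq _ _
  rw [prod_gSum_div_mul_of_modEq ω _ hΘ hsum _ hmod,
    sMult_mul_of_modEq hq d γ δ hNdvd hp (m := -m) (by rw [mul_neg]; exact hmod.neg),
    sMult_mul_of_modEq hq d γ δ hNdvd hp (m := 0) (by rw [mul_zero]),
    MulChar.pow_mul_mod_eq ω hp _ (Finset.mem_range.mp hm), mul_pow, hA]

/-- Frobenius relation: `F_q(γ, pδ, N | t) = F_q(γ, δ, N | t^p)` where `p` is the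
characteristic of `F_q`. -/
theorem Fhyp_frobenius (F : Type) [Field F] [Fintype F] [DecidableEq F]
    (hodd : Odd (Fintype.card F))
    (ω : MulChar F ℂ) (hω : ∀ χ : MulChar F ℂ, ∃ m : ℤ, χ = ω ^ m)
    (Θ : AddChar F ℂ) (hΘ : Θ ≠ 1)
    (d : ℕ) (γ δ : Fin (d + 2) → ℤ)
    (hsum : ∑ i, γ i = 0) (hgcd : Finset.univ.gcd γ = 1)
    (N : ℕ) (hN : 0 < N) (hNdvd : N ∣ Fintype.card F - 1)
    (t : F) (ht : t ≠ 0) :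
    Fhyp F ω Θ d γ (fun i => (ringChar F : ℤ) * δ i) N t =
      Fhyp F ω Θ d γ δ N (t ^ ringChar F) :=
  Fhyp_frobenius_general F ω Θ hΘ d γ δ hsum N hNdvd t
end
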